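/- Let X be a complex Banach space, A a bounded linear operator on X, 2 < α < 3 real, γ ∈ ℝ, λ a positive integer, and let (S_α(n))_{n ≥ −λ} be the α-resolvent sequence generated by A, α, γ, λ. Then Δ^α S_α(n) = A∘S_α(n) + γ·S_α(n−λ) for every n ∈ ℕ, where Δ^α is applied to the B(X)-valued sequence (S_α(n))_{n∈ℕ}. -/

import Mathlib

/-- The kernel `k^β(j) = Γ(β+j)/(Γ(β)Γ(j+1))`. -/
noncomputable def kker (β : ℝ) (j : ℕ) : ℝ :=
  Real.Gamma (β + j) / (Real.Gamma β * Real.Gamma (j + 1))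

/-- Finite convolution of a scalar sequence with a vector-valued sequence:
`(a*g)(n) = Σ_{j=0}^n a(n−j) • g(j)`. -/
noncomputable def conv {R M : Type*} [Semiring R] [AddCommMonoid M] [Module R M]
    (a : ℕ → R) (g : ℕ → M) (n : ℕ) : M :=
  ∑ j ∈ Finset.range (n + 1), a (n - j) • g j

/-- Forward difference `Δu(n) = u(n+1) − u(n)`. -/
def fdiff {M : Type*} [AddCommGroup M] (u : ℕ → M) (n : ℕ) : M := u (n + 1) - u n

/-- Riemann–Liouville fractional difference of order `α` (for `2 < α < 3`):
`Δ^α u(n) = Δ³ (k^{3−α} * u)(n)`. -/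
noncomputable def fracDiff {M : Type*} [AddCommGroup M] [Module ℝ M]
    (α : ℝ) (u : ℕ → M) (n : ℕ) : M :=
  fdiff (fdiff (fdiff (conv (kker (3 - α)) u))) n

/-- `S` is the `α`-resolvent sequence generated by `A, α, γ, lam` (Definition 3.1):
`S(−i) = 0` for `i = 1,…,lam`; `S(0) = S(1) = S(2) = I`; and for all `n ∈ ℕ`,
`S(n+3) − 2S(n+2) + S(n+1) = A∘(k^{α−2}*S)(n) + γ·(k^{α−2}*S^λ)(n)
 + k^{α−2}(n+3)I + (1−α)k^{α−2}(n+2)I + ((α−1)(α−2)/2)k^{α−2}(n+1)I`,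
where `S^λ(n) = S(n−lam)`. -/
def IsResolvent {X : Type*} [NormedAddCommGroup X] [NormedSpace ℂ X]
    (A : X →L[ℂ] X) (α : ℝ) (γ : ℝ) (lam : ℕ) (S : ℤ → X →L[ℂ] X) : Prop :=
  (∀ i : ℕ, 1 ≤ i → i ≤ lam → S (-(i : ℤ)) = 0) ∧
  S 0 = 1 ∧ S 1 = 1 ∧ S 2 = 1 ∧
  ∀ n : ℕ, S ((n : ℤ) + 3) - 2 • S ((n : ℤ) + 2) + S ((n : ℤ) + 1) =
    A.comp (conv (kker (α - 2)) (fun m : ℕ => S (m : ℤ)) n)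
    + γ • conv (kker (α - 2)) (fun m : ℕ => S ((m : ℤ) - (lam : ℤ))) n
    + kker (α - 2) (n + 3) • (1 : X →L[ℂ] X)
    + ((1 - α) * kker (α - 2) (n + 2)) • (1 : X →L[ℂ] X)
    + ((α - 1) * (α - 2) / 2 * kker (α - 2) (n + 1)) • (1 : X →L[ℂ] X)

open Finset

lemma kker_zero {β : ℝ} (hβ : 0 < β) : kker β 0 = 1 := by
  have h := (Real.Gamma_pos_of_pos hβ).ne'
  simp [kker, Real.Gamma_one, div_self h]

lemma kker_succ {β : ℝ} (hβ : 0 < β) (j : ℕ) :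
    ((j : ℝ) + 1) * kker β (j + 1) = (β + j) * kker β j := by
  have hβj : (0:ℝ) < β + j := by positivity
  have hj1 : (0:ℝ) < (j:ℝ) + 1 := by positivity
  have hΓβ := (Real.Gamma_pos_of_pos hβ).ne'
  have hΓj := (Real.Gamma_pos_of_pos hj1).ne'
  unfold kker
  push_cast
  rw [show β + ((j:ℝ) + 1) = (β + j) + 1 by ring, Real.Gamma_add_one hβj.ne',
    show (j:ℝ) + 1 + 1 = ((j:ℝ) + 1) + 1 from rfl, Real.Gamma_add_one hj1.ne']
  field_simp

lemma kker_conv {β δ : ℝ} (hβ : 0 < β) (hδ : 0 < δ) (n : ℕ) :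
    conv (kker β) (kker δ) n = kker (β + δ) n := by
  have hβδ : (0:ℝ) < β + δ := by positivity
  induction n with
  | zero => simp [conv, kker_zero hβ, kker_zero hδ, kker_zero hβδ]
  | succ n ih =>
    have hne : ((n:ℝ)+1) ≠ 0 := by positivity
    refine mul_left_cancel₀ hne ?_
    rw [kker_succ hβδ n, ← ih]
    simp only [conv, smul_eq_mul]
    rw [Finset.mul_sum, Finset.mul_sum]
    have step1 : ∀ j ∈ range (n+2), ((n:ℝ)+1) * (kker β (n+1-j) * kker δ j)
        = ((n+1-j : ℕ):ℝ) * kker β (n+1-j) * kker δ j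
          + kker β (n+1-j) * ((j:ℝ) * kker δ j) := by
      intro j hj
      have hj' : j ≤ n+1 := by simpa [Nat.lt_succ_iff] using hj
      have hc : ((n+1-j : ℕ):ℝ) = ((n:ℝ)+1) - (j:ℝ) := by
        rw [Nat.cast_sub hj']; push_cast; ring
      rw [hc]; ring
    rw [Finset.sum_congr rfl step1, Finset.sum_add_distrib]
    have hA : ∑ j ∈ range (n+2), ((n+1-j : ℕ):ℝ) * kker β (n+1-j) * kker δ j
        = ∑ j ∈ range (n+1), (β + ((n-j : ℕ):ℝ)) * kker β (n-j) * kker δ j := by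
      rw [Finset.sum_range_succ]
      simp only [Nat.sub_self, Nat.cast_zero, zero_mul]
      rw [add_zero]
      refine Finset.sum_congr rfl ?_
      intro j hj
      have hj' : j ≤ n := by simpa [Nat.lt_succ_iff] using hj
      have h1 : n + 1 - j = (n - j) + 1 := by omega
      rw [h1]
      push_cast
      rw [kker_succ hβ (n-j)]
    have hB : ∑ j ∈ range (n+2), kker β (n+1-j) * ((j:ℝ) * kker δ j)
        = ∑ j ∈ range (n+1), kker β (n-j) * ((δ + ((j : ℕ):ℝ)) * kker δ j) := by
      rw [Finset.sum_range_succ']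
      simp only [Nat.cast_zero, zero_mul, mul_zero, add_zero]
      refine Finset.sum_congr rfl ?_
      intro j hj
      have h1 : n + 1 - (j+1) = n - j := by omega
      rw [h1]
      push_cast
      rw [kker_succ hδ j]
    rw [hA, hB, ← Finset.sum_add_distrib]
    refine Finset.sum_congr rfl ?_
    intro j hj
    have hj' : j ≤ n := by simpa [Nat.lt_succ_iff] using hj
    have hc : ((n-j : ℕ):ℝ) = (n:ℝ) - (j:ℝ) := by
      rw [Nat.cast_sub hj']
    rw [hc]; ring

lemma kker_one (n : ℕ) : kker 1 n = 1 := by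
  have h : (0:ℝ) < (n:ℝ) + 1 := by positivity
  have hΓ := (Real.Gamma_pos_of_pos h).ne'
  simp [kker, Real.Gamma_one, add_comm (1:ℝ) (n:ℝ), div_self hΓ]

lemma kker_val1 {β : ℝ} (hβ : 0 < β) : kker β 1 = β := by
  have h := kker_succ hβ 0
  simpa [kker_zero hβ] using h

lemma kker_val2 {β : ℝ} (hβ : 0 < β) : kker β 2 = β * (β + 1) / 2 := by
  have h := kker_succ hβ 1
  rw [kker_val1 hβ] at h
  push_cast at h
  linarith

section VectorLemmas
variable {M : Type*} [AddCommGroup M] [Module ℝ M]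

lemma conv_succ (a : ℕ → ℝ) (u : ℕ → M) (n : ℕ) :
    conv a u (n+1) = conv a (fun m => u (m+1)) n + a (n+1) • u 0 := by
  rw [conv, Finset.sum_range_succ' (fun j => a (n+1-j) • u j) (n+1)]
  simp [conv]

lemma conv_sub (a : ℕ → ℝ) (u v : ℕ → M) (n : ℕ) :
    conv a (fun m => u m - v m) n = conv a u n - conv a v n := by
  simp [conv, smul_sub, Finset.sum_sub_distrib]

lemma conv_add (a : ℕ → ℝ) (u v : ℕ → M) (n : ℕ) :
    conv a (fun m => u m + v m) n = conv a u n + conv a v n := by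
  simp [conv, smul_add, Finset.sum_add_distrib]

lemma conv_rsmul (a : ℕ → ℝ) (c : ℝ) (u : ℕ → M) (n : ℕ) :
    conv a (fun m => c • u m) n = c • conv a u n := by
  simp only [conv, Finset.smul_sum]
  exact Finset.sum_congr rfl fun j _ => smul_comm _ _ _

lemma conv_smul_const (a c : ℕ → ℝ) (x : M) (n : ℕ) :
    conv a (fun m => c m • x) n = conv a c n • x := by
  simp [conv, smul_smul, ← Finset.sum_smul, smul_eq_mul]

lemma conv_onefun (u : ℕ → M) (c : ℕ → ℝ) (hc : ∀ p, c p = 1) (n : ℕ) :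
    conv c u n = ∑ j ∈ Finset.range (n+1), u j := by
  unfold conv
  exact Finset.sum_congr rfl fun j _ => by rw [hc, one_smul]

lemma fdiff_conv (a : ℕ → ℝ) (u : ℕ → M) (n : ℕ) :
    fdiff (conv a u) n = conv a (fdiff u) n + a (n+1) • u 0 := by
  have h2 : conv a (fdiff u) n = conv a (fun m => u (m+1)) n - conv a u n := by
    rw [show (fdiff u) = fun m => u (m+1) - u m from rfl, conv_sub]
  rw [fdiff, conv_succ a u n, h2]
  abel

lemma conv_assoc (a b : ℕ → ℝ) (u : ℕ → M) (n : ℕ) :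
    conv a (conv b u) n = conv (conv a b) u n := by
  simp only [conv, Finset.smul_sum, smul_smul, smul_eq_mul, Finset.sum_smul]
  simp only [Finset.range_eq_Ico]
  have swap := Finset.sum_Ico_Ico_comm 0 (n+1)
      (fun i j => (a (n - j) * b (j - i)) • u i)
  rw [← swap]
  refine Finset.sum_congr rfl ?_
  intro i hi
  have hi' : i ≤ n := by simp only [Finset.mem_Ico] at hi; omega
  rw [Finset.sum_Ico_eq_sum_range]
  have hn : n + 1 - i = n - i + 1 := by omega
  rw [hn, Finset.range_eq_Ico]
  refine Finset.sum_congr rfl ?_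
  intro m hm
  have e1 : n - (i + m) = n - i - m := by omega
  have e2 : i + m - i = m := by omega
  rw [e1, e2]

end VectorLemmas

lemma conv_comp {X : Type*} [NormedAddCommGroup X] [NormedSpace ℂ X]
    (a : ℕ → ℝ) (A : X →L[ℂ] X) (v : ℕ → X →L[ℂ] X) (n : ℕ) :
    conv a (fun m => A.comp (v m)) n = A.comp (conv a v n) := by
  ext x
  simp [conv, ContinuousLinearMap.sum_apply, map_sum]
lemma final_cancel {M : Type*} [AddCommGroup M] [Module ℝ M] (γ : ℝ)
    (One : M) (P Q R T : M) (s₁ s₂ s₃ s₄ : ℝ) (h : s₁ + s₂ = s₃ + s₄) :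
    P + Q + γ • (R + T) + s₁ • One + s₂ • One - (P + γ • R + s₃ • One + s₄ • One)
      = Q + γ • T := by
  have hs : s₁ • One + s₂ • One = s₃ • One + s₄ • One := by
    rw [← add_smul, ← add_smul, h]
  rw [smul_add γ R T]
  calc P + Q + (γ • R + γ • T) + s₁ • One + s₂ • One - (P + γ • R + s₃ • One + s₄ • One)
      = (s₁ • One + s₂ • One) - (s₃ • One + s₄ • One) + (Q + γ • T) := by abel
    _ = Q + γ • T := by rw [hs]; abel



set_option maxHeartbeats 1000000 in
/-- Lemma 3.6: if `S` is the `α`-resolvent sequence generated by `A, α, γ, lam`,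
then `Δ^α S(n) = A∘S(n) + γ·S(n−lam)` for every `n ∈ ℕ`. -/
theorem fracDiff_resolvent {X : Type*} [NormedAddCommGroup X] [NormedSpace ℂ X]
    (A : X →L[ℂ] X) (α : ℝ) (hα1 : 2 < α) (hα2 : α < 3) (γ : ℝ)
    (lam : ℕ) (hlam : 0 < lam) (S : ℤ → X →L[ℂ] X)
    (hS : IsResolvent A α γ lam S) :
    ∀ n : ℕ,
      fracDiff α (fun m : ℕ => S (m : ℤ)) n = A.comp (S (n : ℤ)) + γ • S ((n : ℤ) - (lam : ℤ)) := by
  obtain ⟨-, h0, h1, h2, hrec⟩ := hS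
  intro n
  have h3α : (0:ℝ) < 3 - α := by linarith
  have hα2' : (0:ℝ) < α - 2 := by linarith
  set a := kker (3 - α) with ha
  set b := kker (α - 2) with hb
  set u : ℕ → (X →L[ℂ] X) := fun m : ℕ => S (m : ℤ) with hu
  set v : ℕ → (X →L[ℂ] X) := fun m : ℕ => S ((m : ℤ) - (lam : ℤ)) with hv
  have hu0 : u 0 = 1 := by simp only [hu]; norm_num [h0]
  have hu1 : u 1 = 1 := by simp only [hu]; norm_num [h1]
  have hu2 : u 2 = 1 := by simp only [hu]; norm_num [h2]
  have hDu0 : fdiff u 0 = 0 := by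
    show u 1 - u 0 = 0
    rw [hu1, hu0, sub_self]
  have hD0 : fdiff (fdiff u) 0 = 0 := by
    show (u 2 - u 1) - (u 1 - u 0) = 0
    rw [hu2, hu1, hu0]
    abel
  -- rewrite the recursion
  have hrec' : ∀ j : ℕ, fdiff (fdiff u) (j+1)
      = A.comp (conv b u j) + γ • conv b v j
        + (b (j+3) + (1-α) * b (j+2) + (α-1)*(α-2)/2 * b (j+1)) • (1 : X →L[ℂ] X) := by
    intro j
    have h := hrec j
    have eu3 : S ((j:ℤ) + 3) = u (j+3) := by simp only [hu]; norm_cast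
    have eu2 : S ((j:ℤ) + 2) = u (j+2) := by simp only [hu]; norm_cast
    have eu1 : S ((j:ℤ) + 1) = u (j+1) := by simp only [hu]; norm_cast
    rw [eu3, eu2, eu1] at h
    calc fdiff (fdiff u) (j+1) = u (j+3) - 2 • u (j+2) + u (j+1) := by
          show (u (j+3) - u (j+2)) - (u (j+2) - u (j+1)) = _
          abel
      _ = _ := by rw [h, add_smul, add_smul]; abel
  -- the kernel convolution is constant 1
  have hab : ∀ p : ℕ, conv a b p = (1:ℝ) := by
    intro p
    rw [ha, hb, kker_conv h3α hα2', show (3-α)+(α-2) = (1:ℝ) by ring, kker_one]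
  have hb0 : b 0 = 1 := by rw [hb, kker_zero hα2']
  have hb1 : b 1 = α - 2 := by rw [hb, kker_val1 hα2']
  have hb2 : b 2 = (α-2)*(α-1)/2 := by rw [hb, kker_val2 hα2']; ring
  -- shifted kernel sums
  have hs1 : ∀ p : ℕ, conv a (fun m => b (m+1)) p = 1 - a (p+1) := by
    intro p
    have h := conv_succ a b p
    rw [hab (p+1), hb0] at h
    simp only [smul_eq_mul, mul_one] at h
    linarith
  have hs2 : ∀ p : ℕ, conv a (fun m => b (m+2)) p = 1 - a (p+2) - (α-2) * a (p+1) := by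
    intro p
    have h := conv_succ a (fun m => b (m+1)) p
    simp only [zero_add, show (fun m : ℕ => b (m+1+1)) = fun m : ℕ => b (m+2) from rfl,
      show p+1+1 = p+2 from rfl] at h
    rw [hs1 (p+1), hb1] at h
    simp only [smul_eq_mul] at h
    linarith
  have hs3 : ∀ p : ℕ, conv a (fun m => b (m+3)) p
      = 1 - a (p+3) - (α-2) * a (p+2) - ((α-2)*(α-1)/2) * a (p+1) := by
    intro p
    have h := conv_succ a (fun m => b (m+2)) p
    simp only [zero_add, show (fun m : ℕ => b (m+1+2)) = fun m : ℕ => b (m+3) from rfl,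
      show p+1+2 = p+3 from rfl, show p+1+1 = p+2 from rfl] at h
    rw [hs2 (p+1), hb2] at h
    simp only [smul_eq_mul, show p+1+2 = p+3 from rfl, show p+1+1 = p+2 from rfl] at h
    linarith
  -- evaluating the convolved recursion
  have hconvR : ∀ m : ℕ, conv a (fun j => A.comp (conv b u j) + γ • conv b v j
        + (b (j+3) + (1-α) * b (j+2) + (α-1)*(α-2)/2 * b (j+1)) • (1 : X →L[ℂ] X)) m
      = A.comp (∑ j ∈ Finset.range (m+1), u j) + γ • (∑ j ∈ Finset.range (m+1), v j)
        + ((α-2)*(α-3)/2 - a (m+3) + a (m+2)) • (1 : X →L[ℂ] X) := by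
    intro m
    rw [conv_add a (fun j => A.comp (conv b u j) + γ • conv b v j)
        (fun j => (b (j+3) + (1-α) * b (j+2) + (α-1)*(α-2)/2 * b (j+1)) • (1 : X →L[ℂ] X)) m,
      conv_add a (fun j => A.comp (conv b u j)) (fun j => γ • conv b v j) m]
    have pA : conv a (fun j => A.comp (conv b u j)) m = A.comp (∑ j ∈ Finset.range (m+1), u j) := by
      rw [conv_comp a A (conv b u) m]
      congr 1
      rw [conv_assoc, conv_onefun u (conv a b) hab m]
    have pB : conv a (fun j => γ • conv b v j) m = γ • (∑ j ∈ Finset.range (m+1), v j) := by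
      rw [conv_rsmul a γ (conv b v) m]
      congr 1
      rw [conv_assoc, conv_onefun v (conv a b) hab m]
    have pC : conv a (fun j => (b (j+3) + (1-α) * b (j+2) + (α-1)*(α-2)/2 * b (j+1))
          • (1 : X →L[ℂ] X)) m
        = ((α-2)*(α-3)/2 - a (m+3) + a (m+2)) • (1 : X →L[ℂ] X) := by
      rw [conv_smul_const a (fun j => b (j+3) + (1-α) * b (j+2) + (α-1)*(α-2)/2 * b (j+1))
        (1 : X →L[ℂ] X) m]
      congr 1
      have hsplit : conv a (fun j => b (j+3) + (1-α) * b (j+2) + (α-1)*(α-2)/2 * b (j+1)) m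
          = conv a (fun j => b (j+3)) m + (1-α) * conv a (fun j => b (j+2)) m
            + (α-1)*(α-2)/2 * conv a (fun j => b (j+1)) m := by
        simp only [conv, smul_eq_mul, Finset.mul_sum, ← Finset.sum_add_distrib]
        exact Finset.sum_congr rfl fun j _ => by ring
      rw [hsplit, hs1, hs2, hs3]
      ring
    rw [pA, pB, pC]
  -- the convolved second difference
  have hconvD : ∀ m : ℕ, conv a (fdiff (fdiff u)) m
      = A.comp (∑ j ∈ Finset.range m, u j) + γ • (∑ j ∈ Finset.range m, v j)
        + ((α-2)*(α-3)/2 - a (m+2) + a (m+1)) • (1 : X →L[ℂ] X) := by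
    intro m
    cases m with
    | zero =>
      have hz : conv a (fdiff (fdiff u)) 0 = 0 := by simp [conv, hD0]
      have hsc : (α-2)*(α-3)/2 - a (0+2) + a (0+1) = 0 := by
        simp only [zero_add]
        rw [ha, kker_val2 h3α, kker_val1 h3α]
        ring
      rw [hz, hsc]
      simp
    | succ p =>
      rw [conv_succ a (fdiff (fdiff u)) p, hD0, smul_zero, add_zero]
      have e : (fun m => fdiff (fdiff u) (m+1)) = fun j => A.comp (conv b u j) + γ • conv b v j
          + (b (j+3) + (1-α) * b (j+2) + (α-1)*(α-2)/2 * b (j+1)) • (1 : X →L[ℂ] X) :=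
        funext hrec'
      rw [e, hconvR p]
  -- assembling the triple difference
  have e1 : ∀ p : ℕ, fdiff (conv a u) p = conv a (fdiff u) p + a (p+1) • u 0 :=
    fun p => fdiff_conv a u p
  have e2 : ∀ p : ℕ, fdiff (fdiff (conv a u)) p
      = conv a (fdiff (fdiff u)) p + (a (p+2) - a (p+1)) • (1 : X →L[ℂ] X) := by
    intro p
    have hmid : conv a (fdiff u) (p+1) - conv a (fdiff u) p
        = conv a (fdiff (fdiff u)) p + a (p+1) • fdiff u 0 := fdiff_conv a (fdiff u) p
    rw [hDu0, smul_zero, add_zero] at hmid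
    show fdiff (conv a u) (p+1) - fdiff (conv a u) p = _
    rw [e1 (p+1), e1 p, hu0, show p+1+1 = p+2 from rfl, sub_smul, ← hmid]
    abel
  show fdiff (fdiff (conv a u)) (n+1) - fdiff (fdiff (conv a u)) n
      = A.comp (S (n:ℤ)) + γ • S ((n:ℤ) - (lam:ℤ))
  have eR : A.comp (S (n:ℤ)) + γ • S ((n:ℤ) - (lam:ℤ)) = A.comp (u n) + γ • v n := rfl
  rw [e2 (n+1), e2 n, hconvD (n+1), hconvD n, eR,
    Finset.sum_range_succ, Finset.sum_range_succ, ContinuousLinearMap.comp_add,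
    show n+1+2 = n+3 from rfl, show n+1+1 = n+2 from rfl]
  refine final_cancel (M := X →L[ℂ] X) γ 1 (A.comp (∑ x ∈ Finset.range n, u x))
    (A.comp (u n)) (∑ x ∈ Finset.range n, v x) (v n)
    ((α - 2) * (α - 3) / 2 - a (n + 3) + a (n + 2)) (a (n + 3) - a (n + 2))
    ((α - 2) * (α - 3) / 2 - a (n + 2) + a (n + 1)) (a (n + 2) - a (n + 1)) ?_
  ring
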